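/- Let H be a complex Hilbert space with dim H ≥ 3 and let φ : B_s(H) → B_s(H) be a surjective map such that for all A, B, C ∈ B_s(H), A − B ↔_c C if and only if φ(A) − φ(B) ↔_c φ(C). Then for every nonempty subset M ⊆ B_s(H), φ(M^{cc}) = φ(M)^{cc} and φ⁻¹(φ(M^{cc})) = M^{cc}. -/

import Mathlib

noncomputable section

variable {H : Type*} [NormedAddCommGroup H] [InnerProductSpace ℂ H] [CompleteSpace H]

/-- `A ↔_c B`: the self-adjoint operators `A` and `B` commute. -/
def CommC (A B : selfAdjoint (H →L[ℂ] H)) : Prop :=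
  (A : H →L[ℂ] H) * (B : H →L[ℂ] H) = (B : H →L[ℂ] H) * (A : H →L[ℂ] H)

/-- `M^c`: the set of self-adjoint operators commuting with every member of `M`. -/
def CSet (M : Set (selfAdjoint (H →L[ℂ] H))) : Set (selfAdjoint (H →L[ℂ] H)) :=
  {X | ∀ T ∈ M, CommC X T}

/-- `M^{cc} = (M^c)^c`. -/
def CCSet (M : Set (selfAdjoint (H →L[ℂ] H))) : Set (selfAdjoint (H →L[ℂ] H)) :=
  CSet (CSet M)

/-! Taking `A = C`, `B = 0` shows that `φ 0` commutes with every `φ C`, so the hypothesis with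
`B = 0` says exactly that `φ` preserves commutation in both directions. A surjective map with this
property carries commutants to commutants, hence double commutants to double commutants, and each
commutant is saturated for the fibres of `φ`. -/

theorem commC_map_zero
    (φ : selfAdjoint (H →L[ℂ] H) → selfAdjoint (H →L[ℂ] H))
    (hpres : ∀ A B C : selfAdjoint (H →L[ℂ] H),
      CommC (A - B) C ↔ CommC (φ A - φ B) (φ C)) (C : selfAdjoint (H →L[ℂ] H)) :
    CommC (φ 0) (φ C) := by
  have h := (hpres C 0 C).mp (by simp [CommC])
  simp only [CommC, AddSubgroupClass.coe_sub, sub_mul, mul_sub] at h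
  exact sub_right_injective h

theorem commC_iff_commC_map
    (φ : selfAdjoint (H →L[ℂ] H) → selfAdjoint (H →L[ℂ] H))
    (hpres : ∀ A B C : selfAdjoint (H →L[ℂ] H),
      CommC (A - B) C ↔ CommC (φ A - φ B) (φ C)) (A C : selfAdjoint (H →L[ℂ] H)) :
    CommC A C ↔ CommC (φ A) (φ C) := by
  have h0 : CommC (φ 0) (φ C) := commC_map_zero φ hpres C
  rw [← sub_zero A, hpres A 0 C, sub_zero]
  simp only [CommC] at h0 ⊢
  rw [AddSubgroupClass.coe_sub, sub_mul, mul_sub, h0, sub_left_inj]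

section CommutationPreserving

variable {φ : selfAdjoint (H →L[ℂ] H) → selfAdjoint (H →L[ℂ] H)}
  (hφ : ∀ A C, CommC A C ↔ CommC (φ A) (φ C))
include hφ

theorem cSet_image (hsurj : Function.Surjective φ) (M : Set (selfAdjoint (H →L[ℂ] H))) :
    CSet (φ '' M) = φ '' CSet M := by
  ext X
  obtain ⟨Y, rfl⟩ := hsurj X
  constructor
  · intro hY
    exact ⟨Y, fun T hT => (hφ Y T).mpr (hY (φ T) ⟨T, hT, rfl⟩), rfl⟩
  · rintro ⟨Z, hZ, hZY⟩ _ ⟨T, hT, rfl⟩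
    rw [← hZY]
    exact (hφ Z T).mp (hZ T hT)

theorem preimage_image_cSet (M : Set (selfAdjoint (H →L[ℂ] H))) :
    φ ⁻¹' (φ '' CSet M) = CSet M := by
  refine subset_antisymm ?_ (Set.subset_preimage_image φ _)
  rintro X ⟨Z, hZ, hZX⟩ T hT
  rw [hφ, ← hZX, ← hφ]
  exact hZ T hT

end CommutationPreserving

theorem stmt15_general
    (φ : selfAdjoint (H →L[ℂ] H) → selfAdjoint (H →L[ℂ] H))
    (hsurj : Function.Surjective φ)
    (hpres : ∀ A B C : selfAdjoint (H →L[ℂ] H),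
      CommC (A - B) C ↔ CommC (φ A - φ B) (φ C)) :
    ∀ M : Set (selfAdjoint (H →L[ℂ] H)), M.Nonempty →
      φ '' (CCSet M) = CCSet (φ '' M) ∧
      φ ⁻¹' (φ '' (CCSet M)) = CCSet M := by
  intro M _
  have hφ := commC_iff_commC_map φ hpres
  exact ⟨by rw [CCSet, CCSet, cSet_image hφ hsurj, cSet_image hφ hsurj],
    preimage_image_cSet hφ (CSet M)⟩

theorem stmt15
    (hdim : 3 ≤ Module.rank ℂ H)
    (φ : selfAdjoint (H →L[ℂ] H) → selfAdjoint (H →L[ℂ] H))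
    (hsurj : Function.Surjective φ)
    (hpres : ∀ A B C : selfAdjoint (H →L[ℂ] H),
      CommC (A - B) C ↔ CommC (φ A - φ B) (φ C)) :
    ∀ M : Set (selfAdjoint (H →L[ℂ] H)), M.Nonempty →
      φ '' (CCSet M) = CCSet (φ '' M) ∧
      φ ⁻¹' (φ '' (CCSet M)) = CCSet M :=
  stmt15_general φ hsurj hpres
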